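/- Theorem 4.1 (optimality of the service-time optimization algorithm): assume p_i ≥ 0 and d_max,i ≥ 0 for all i, ŝ(0)_i ≤ s⁺_i for all i ∈ {0,…,l−1}, and ŝ(0)_{l−1} + t_{l−1} ≤ T. Then the pair (s*, d*) returned by Algorithm STO is feasible for the service-time LP and is optimal: p·d* ≥ p·d for every feasible pair (s, d). -/

import Mathlib

/-!
Only the service times matter: `d` extends to a feasible pair if and only if `0 ≤ d ≤ d_max` and
every window `[k, j)` satisfies `s⁻_k + Σ_{k ≤ m < j} (d_m + t_m) ≤ s⁺_j` (with `s⁺_l = T`), and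
then `ŝ(d)` is a feasible schedule. Each step of STO raises `d_a` as far as `d_max,a` and the window
constraints allow. Because their right-hand sides are modular in `(k, j)`, two crossing tight
windows meet in a tight window, so the tight windows around `a` have a smallest one.

Optimality is an exchange argument along the order. Take a feasible `d` that agrees with the
current greedy state except at `a` and at the indices not yet processed. By compactness, among
such vectors of profit at least that of `d` there is one, `e`, with `e_a` maximal, and `e_a` is at
most the greedy value. If it were smaller, either no window around `a` is tight and `e_a` can be
raised, or the smallest tight window around `a` contains an unprocessed index `m` with `e_m > 0`,
and moving service time from `m` to `a` loses no profit since `p_m ≤ p_a`.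
-/

def Feasible (l : ℕ) (T : ℝ) (t dmax smin smax s d : ℕ → ℝ) : Prop :=
  (∀ i < l, smin i ≤ s i ∧ s i ≤ smax i) ∧
  (∀ i < l, 0 ≤ d i ∧ d i ≤ dmax i) ∧
  (∀ i < l, s i + d i + t i ≤ (if i + 1 = l then T else s (i + 1)))

def sHat (t smin d : ℕ → ℝ) : ℕ → ℝ
  | 0 => smin 0
  | i + 1 => max (sHat t smin d i + d i + t i) (smin (i + 1))

def stoStep (l : ℕ) (T : ℝ) (t dmax smin smax : ℕ → ℝ) (d : ℕ → ℝ) (a : ℕ) : ℕ → ℝ :=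
  if h : a < l then
    Function.update d a (min (dmax a)
      ((Finset.Icc (a + 1) l).inf' (Finset.nonempty_Icc.mpr (by omega))
        fun j => (if j = l then T else smax j) - sHat t smin d a
          - ∑ m ∈ Finset.Ico a j, ((if m = a then 0 else d m) + t m)))
  else d

def stoD (l : ℕ) (T : ℝ) (t dmax smin smax : ℕ → ℝ) (order : List ℕ) : ℕ → ℝ :=
  order.foldl (stoStep l T t dmax smin smax) fun _ => 0

open Finset Filter Topology

def elapsed (t d : ℕ → ℝ) (k j : ℕ) : ℝ := ∑ m ∈ Ico k j, (d m + t m)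

def deadline (l : ℕ) (T : ℝ) (smax : ℕ → ℝ) (j : ℕ) : ℝ := if j = l then T else smax j

def ServiceFeasible (l : ℕ) (T : ℝ) (t dmax smin smax d : ℕ → ℝ) : Prop :=
  (∀ i < l, 0 ≤ d i ∧ d i ≤ dmax i) ∧
  ∀ k j, k < l → k ≤ j → j ≤ l → smin k + elapsed t d k j ≤ deadline l T smax j

section elapsed

variable {t d e : ℕ → ℝ} {k j : ℕ}

@[simp]
theorem elapsed_self (t d : ℕ → ℝ) (k : ℕ) : elapsed t d k k = 0 := by
  simp [elapsed]

theorem elapsed_add_elapsed (t d : ℕ → ℝ) {i : ℕ} (hki : k ≤ i) (hij : i ≤ j) :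
    elapsed t d k i + elapsed t d i j = elapsed t d k j :=
  sum_Ico_consecutive _ hki hij

theorem elapsed_succ (t d : ℕ → ℝ) (hkj : k ≤ j) :
    elapsed t d k (j + 1) = elapsed t d k j + (d j + t j) :=
  sum_Ico_succ_top hkj _

theorem elapsed_eq_of_mem {a : ℕ} (t d : ℕ → ℝ) (hka : k ≤ a) (haj : a < j) :
    elapsed t d k j = elapsed t d k a + (d a + t a) + elapsed t d (a + 1) j := by
  rw [← elapsed_add_elapsed t d hka haj.le, ← elapsed_add_elapsed t d (Nat.le_succ a) haj,
    elapsed_succ t d le_rfl, elapsed_self]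
  ring

theorem elapsed_mono (h : ∀ m ∈ Ico k j, d m ≤ e m) : elapsed t d k j ≤ elapsed t e k j :=
  sum_le_sum fun m hm => by linarith [h m hm]

theorem elapsed_congr (h : ∀ m ∈ Ico k j, d m = e m) : elapsed t d k j = elapsed t e k j :=
  le_antisymm (elapsed_mono fun m hm => (h m hm).le) (elapsed_mono fun m hm => (h m hm).ge)

theorem elapsed_add_smul (t d v : ℕ → ℝ) (ε : ℝ) (k j : ℕ) :
    elapsed t (d + ε • v) k j = elapsed t d k j + ε * ∑ m ∈ Ico k j, v m := by
  simp only [elapsed, Pi.add_apply, Pi.smul_apply, smul_eq_mul, mul_sum, ← sum_add_distrib]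
  exact sum_congr rfl fun _ _ => by ring

theorem continuous_elapsed (t : ℕ → ℝ) (k j : ℕ) : Continuous fun d => elapsed t d k j := by
  unfold elapsed; fun_prop

end elapsed

section sHat

variable (t smin d : ℕ → ℝ)

theorem le_sHat {i k : ℕ} (hki : k ≤ i) : smin k + elapsed t d k i ≤ sHat t smin d i := by
  induction i with
  | zero =>
    obtain rfl : k = 0 := by omega
    simp [sHat]
  | succ i ih =>
    rcases hki.eq_or_lt with rfl | hki
    · simp [sHat]
    · rw [elapsed_succ t d (by omega), sHat]
      linarith [ih (by omega), le_max_left (sHat t smin d i + d i + t i) (smin (i + 1))]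

theorem exists_sHat_eq (i : ℕ) : ∃ k ≤ i, sHat t smin d i = smin k + elapsed t d k i := by
  induction i with
  | zero => exact ⟨0, le_rfl, by simp [sHat]⟩
  | succ i ih =>
    obtain ⟨k, hki, hk⟩ := ih
    rcases max_cases (sHat t smin d i + d i + t i) (smin (i + 1)) with ⟨h, _⟩ | ⟨h, _⟩
    · refine ⟨k, by omega, ?_⟩
      rw [sHat, h, hk, elapsed_succ t d hki]
      ring
    · exact ⟨i + 1, le_rfl, by rw [sHat, h, elapsed_self, add_zero]⟩

end sHat

section feasibility

variable {l : ℕ} {T : ℝ} {t dmax smin smax : ℕ → ℝ}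

theorem add_elapsed_le_of_chain {s d : ℕ → ℝ}
    (hchain : ∀ i < l, s i + d i + t i ≤ (if i + 1 = l then T else s (i + 1)))
    {k j : ℕ} (hk : k < l) (hkj : k ≤ j) (hjl : j ≤ l) :
    s k + elapsed t d k j ≤ deadline l T s j := by
  induction j, hkj using Nat.le_induction with
  | base => simp [deadline, hk.ne]
  | succ j hkj ih =>
    have hprev := ih (by omega)
    rw [deadline, if_neg (show j ≠ l by omega)] at hprev
    rw [elapsed_succ t d hkj, deadline]
    linarith [hchain j (by omega)]

theorem Feasible.serviceFeasible {s d : ℕ → ℝ} (h : Feasible l T t dmax smin smax s d) :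
    ServiceFeasible l T t dmax smin smax d := by
  obtain ⟨hs, hd, hchain⟩ := h
  refine ⟨hd, fun k j hk hkj hjl => ?_⟩
  have hsk := add_elapsed_le_of_chain hchain hk hkj hjl
  have hk_win := (hs k hk).1
  rcases hjl.eq_or_lt with rfl | hjl
  · simp only [deadline, if_true] at hsk ⊢
    linarith
  · have hj_win := (hs j hjl).2
    simp only [deadline, hjl.ne, if_false] at hsk ⊢
    linarith

theorem ServiceFeasible.feasible_sHat {d : ℕ → ℝ} (h : ServiceFeasible l T t dmax smin smax d) :
    Feasible l T t dmax smin smax (sHat t smin d) d := by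
  refine ⟨fun i hi => ⟨?_, ?_⟩, h.1, fun i hi => ?_⟩
  · simpa using le_sHat t smin d (le_refl i)
  · obtain ⟨k, hki, hk⟩ := exists_sHat_eq t smin d i
    simpa [hk, deadline, hi.ne] using h.2 k i (by omega) hki hi.le
  · split_ifs with hil
    · obtain ⟨k, hki, hk⟩ := exists_sHat_eq t smin d i
      have := h.2 k (i + 1) (by omega) (by omega) hil.le
      rw [elapsed_succ t d hki, deadline, if_pos hil] at this
      linarith
    · exact le_max_left _ _

theorem serviceFeasible_zero (hdmax : ∀ i < l, 0 ≤ dmax i)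
    (hwin : ∀ i < l, sHat t smin (fun _ => 0) i ≤ smax i)
    (hT : sHat t smin (fun _ => 0) (l - 1) + t (l - 1) ≤ T) :
    ServiceFeasible l T t dmax smin smax fun _ => 0 := by
  refine ⟨fun i hi => ⟨le_rfl, hdmax i hi⟩, fun k j hk hkj hjl => ?_⟩
  rcases hjl.eq_or_lt with rfl | hjl
  · obtain ⟨i, rfl⟩ : ∃ i, j = i + 1 := ⟨j - 1, by omega⟩
    have := le_sHat t smin (fun _ => 0) (i := i) (k := k) (by omega)
    rw [elapsed_succ _ _ (by omega), deadline, if_pos rfl]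
    simp only [Nat.add_sub_cancel] at hT
    linarith
  · rw [deadline, if_neg hjl.ne]
    exact (le_sHat t smin _ hkj).trans (hwin j hjl)

end feasibility

section greedy

variable {l : ℕ} {T : ℝ} {t dmax smin smax : ℕ → ℝ}

theorem stoStep_apply_of_ne (d : ℕ → ℝ) {a m : ℕ} (hma : m ≠ a) :
    stoStep l T t dmax smin smax d a m = d m := by
  unfold stoStep
  split_ifs
  · exact Function.update_of_ne hma _ _
  · rfl

theorem stoStep_eq_update (d : ℕ → ℝ) (a : ℕ) :
    stoStep l T t dmax smin smax d a =
      Function.update d a (stoStep l T t dmax smin smax d a a) := by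
  ext m
  rcases eq_or_ne m a with rfl | hma
  · rw [Function.update_self]
  · rw [stoStep_apply_of_ne d hma, Function.update_of_ne hma]

theorem le_stoStep_self_iff (d : ℕ → ℝ) {a : ℕ} (ha : a < l) {x : ℝ} :
    x ≤ stoStep l T t dmax smin smax d a a ↔
      x ≤ dmax a ∧ ∀ j, a < j → j ≤ l →
        sHat t smin d a + x + t a + elapsed t d (a + 1) j ≤ deadline l T smax j := by
  have hsum : ∀ j, a < j →
      ∑ m ∈ Ico a j, ((if m = a then 0 else d m) + t m) = t a + elapsed t d (a + 1) j := by
    intro j haj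
    rw [sum_eq_sum_Ico_succ_bot haj, if_pos rfl, zero_add, elapsed]
    congr 1
    exact sum_congr rfl fun m hm => by rw [if_neg (by simp at hm; omega)]
  rw [stoStep, dif_pos ha, Function.update_self, le_min_iff, le_inf'_iff]
  refine and_congr_right fun _ => ⟨fun h j haj hjl => ?_, fun h j hj => ?_⟩
  · have := h j (mem_Icc.2 ⟨haj, hjl⟩)
    rw [hsum j haj] at this
    rw [deadline]
    linarith
  · obtain ⟨haj, hjl⟩ := mem_Icc.1 hj
    have := h j haj hjl
    rw [hsum j haj]
    rw [deadline] at this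
    linarith

theorem stoStep_self_nonneg {g : ℕ → ℝ} {a : ℕ} (ha : a < l) (hdmax : 0 ≤ dmax a)
    (hg : ServiceFeasible l T t dmax smin smax g) (hga : g a = 0) :
    0 ≤ stoStep l T t dmax smin smax g a a := by
  refine (le_stoStep_self_iff g ha).2 ⟨hdmax, fun j haj hjl => ?_⟩
  obtain ⟨k, hka, hk⟩ := exists_sHat_eq t smin g a
  have := hg.2 k j (by omega) (by omega) hjl
  rw [elapsed_eq_of_mem t g hka haj, hga] at this
  rw [hk]
  linarith

theorem serviceFeasible_stoStep {g : ℕ → ℝ} {a : ℕ} (ha : a < l) (hdmax : 0 ≤ dmax a)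
    (hg : ServiceFeasible l T t dmax smin smax g) (hga : g a = 0) :
    ServiceFeasible l T t dmax smin smax (stoStep l T t dmax smin smax g a) := by
  rw [stoStep_eq_update]
  set δ := stoStep l T t dmax smin smax g a a
  have hδ := (le_stoStep_self_iff g ha).1 (le_refl δ)
  have hδ₀ : 0 ≤ δ := stoStep_self_nonneg ha hdmax hg hga
  refine ⟨fun i hi => ?_, fun k j hk hkj hjl => ?_⟩
  · rcases eq_or_ne i a with rfl | hia
    · simpa using ⟨hδ₀, hδ.1⟩
    · simpa [Function.update_of_ne hia] using hg.1 i hi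
  · have hupd : ∀ m, m ≠ a → Function.update g a δ m = g m := fun m hm =>
      Function.update_of_ne hm _ _
    by_cases hmem : k ≤ a ∧ a < j
    · rw [elapsed_eq_of_mem _ _ hmem.1 hmem.2, Function.update_self,
        elapsed_congr fun m hm => hupd m (by simp at hm; omega),
        elapsed_congr (k := a + 1) fun m hm => hupd m (by simp at hm; omega)]
      linarith [le_sHat t smin g hmem.1, hδ.2 j hmem.2 hjl]
    · rw [elapsed_congr fun m hm => hupd m (by simp at hm; omega)]
      exact hg.2 k j hk hkj hjl

theorem le_stoStep_self {g e : ℕ → ℝ} {a : ℕ} (ha : a < l)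
    (he : ServiceFeasible l T t dmax smin smax e) (hge : ∀ m < l, m ≠ a → g m ≤ e m) :
    e a ≤ stoStep l T t dmax smin smax g a a := by
  refine (le_stoStep_self_iff g ha).2 ⟨(he.1 a ha).2, fun j haj hjl => ?_⟩
  obtain ⟨k, hka, hk⟩ := exists_sHat_eq t smin g a
  have h₁ : elapsed t g k a ≤ elapsed t e k a :=
    elapsed_mono fun m hm => hge m (by simp at hm; omega) (by simp at hm; omega)
  have h₂ : elapsed t g (a + 1) j ≤ elapsed t e (a + 1) j :=
    elapsed_mono fun m hm => hge m (by simp at hm; omega) (by simp at hm; omega)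
  have := he.2 k j (by omega) (by omega) hjl
  rw [elapsed_eq_of_mem t e hka haj] at this
  rw [hk]
  linarith

theorem serviceFeasible_foldl_stoStep (hdmax : ∀ i < l, 0 ≤ dmax i) (L : List ℕ) {g : ℕ → ℝ}
    (hg : ServiceFeasible l T t dmax smin smax g) (hLl : ∀ m ∈ L, m < l) (hL0 : ∀ m ∈ L, g m = 0)
    (hnd : L.Nodup) :
    ServiceFeasible l T t dmax smin smax (L.foldl (stoStep l T t dmax smin smax) g) := by
  induction L generalizing g with
  | nil => exact hg
  | cons a L ih =>
    obtain ⟨haL, hnd⟩ := List.nodup_cons.1 hnd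
    have ha := hLl a List.mem_cons_self
    exact ih (serviceFeasible_stoStep ha (hdmax a ha) hg (hL0 a List.mem_cons_self))
      (fun m hm => hLl m (.tail a hm))
      (fun m hm => (stoStep_apply_of_ne g (ne_of_mem_of_not_mem hm haL)).trans (hL0 m (.tail a hm)))
      hnd

end greedy

section exchange

variable {l : ℕ} {T : ℝ} {t dmax smin smax : ℕ → ℝ}

theorem ServiceFeasible.tight_of_cross {d : ℕ → ℝ} (h : ServiceFeasible l T t dmax smin smax d)
    {k₁ k₂ j₁ j₂ : ℕ} (hk : k₂ ≤ k₁) (hkj : k₁ ≤ j₂) (hj : j₂ ≤ j₁) (hjl : j₁ ≤ l) (hkl : k₁ < l)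
    (h₁ : smin k₁ + elapsed t d k₁ j₁ = deadline l T smax j₁)
    (h₂ : smin k₂ + elapsed t d k₂ j₂ = deadline l T smax j₂) :
    smin k₁ + elapsed t d k₁ j₂ = deadline l T smax j₂ := by
  -- the constraints of `[k₂, j₁)` and `[k₁, j₂)` add up to those of `[k₁, j₁)` and `[k₂, j₂)`
  have h₂₁ := h.2 k₂ j₁ (by omega) (by omega) hjl
  have h₁₂ := h.2 k₁ j₂ hkl hkj (by omega)
  rw [← elapsed_add_elapsed t d (hk.trans hkj) hj] at h₂₁
  rw [← elapsed_add_elapsed t d hkj hj] at h₁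
  linarith

theorem ServiceFeasible.exists_tight_inter {d : ℕ → ℝ} (h : ServiceFeasible l T t dmax smin smax d)
    {a : ℕ} (htight : ∃ k j, k ≤ a ∧ a < j ∧ j ≤ l ∧
      smin k + elapsed t d k j = deadline l T smax j) :
    ∃ k₀ j₀, k₀ ≤ a ∧ a < j₀ ∧ j₀ ≤ l ∧ smin k₀ + elapsed t d k₀ j₀ = deadline l T smax j₀ ∧
      ∀ k j, k ≤ a → a < j → j ≤ l → smin k + elapsed t d k j = deadline l T smax j →
        k ≤ k₀ ∧ j₀ ≤ j := by
  classical
  set s := (range (a + 1) ×ˢ Ioc a l).filter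
    fun q => smin q.1 + elapsed t d q.1 q.2 = deadline l T smax q.2
  have hs : ∀ k j, (k, j) ∈ s ↔ k ≤ a ∧ a < j ∧ j ≤ l ∧
      smin k + elapsed t d k j = deadline l T smax j := by
    simp [s, and_assoc]
  obtain ⟨k, j, hkj⟩ := htight
  have hne : s.Nonempty := ⟨(k, j), (hs k j).2 hkj⟩
  obtain ⟨⟨k₁, j₁⟩, hq₁, hmax⟩ := s.exists_max_image Prod.fst hne
  obtain ⟨⟨k₂, j₂⟩, hq₂, hmin⟩ := s.exists_min_image Prod.snd hne
  obtain ⟨hk₁, hj₁, hjl₁, ht₁⟩ := (hs k₁ j₁).1 hq₁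
  obtain ⟨hk₂, hj₂, hjl₂, ht₂⟩ := (hs k₂ j₂).1 hq₂
  refine ⟨k₁, j₂, hk₁, hj₂, hjl₂, h.tight_of_cross (hmax _ hq₂) (by omega) (hmin _ hq₁) hjl₁
    (by omega) ht₁ ht₂, fun k j hka haj hjl ht => ⟨hmax (k, j) ?_, hmin (k, j) ?_⟩⟩ <;>
  exact (hs k j).2 ⟨hka, haj, hjl, ht⟩

theorem eventually_add_mul_le {x y b : ℝ} (hx : x ≤ b) (hy : x = b → y ≤ 0) :
    ∀ᶠ ε in 𝓝[>] (0 : ℝ), x + ε * y ≤ b := by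
  rcases hx.lt_or_eq with hx | rfl
  · have : Tendsto (fun ε => x + ε * y) (𝓝[>] 0) (𝓝 x) := by
      refine Tendsto.mono_left ?_ nhdsWithin_le_nhds
      exact (show Continuous fun ε : ℝ => x + ε * y by fun_prop).tendsto' 0 x (by simp)
    exact (this.eventually (eventually_lt_nhds hx)).mono fun _ => le_of_lt
  · filter_upwards [self_mem_nhdsWithin] with ε (hε : 0 < ε)
    nlinarith [hy rfl]

theorem ServiceFeasible.exists_add_smul {e v : ℕ → ℝ} (he : ServiceFeasible l T t dmax smin smax e)
    (hlow : ∀ i < l, e i = 0 → 0 ≤ v i) (hup : ∀ i < l, e i = dmax i → v i ≤ 0)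
    (htight : ∀ k j, k < l → k ≤ j → j ≤ l →
      smin k + elapsed t e k j = deadline l T smax j → ∑ m ∈ Ico k j, v m ≤ 0) :
    ∃ ε : ℝ, 0 < ε ∧ ServiceFeasible l T t dmax smin smax (e + ε • v) := by
  have hbounds : ∀ᶠ ε in 𝓝[>] (0 : ℝ), ∀ i ∈ {i | i < l},
      -e i + ε * -v i ≤ 0 ∧ e i + ε * v i ≤ dmax i :=
    (eventually_all_finite (Set.finite_lt_nat l)).2 fun i hi =>
      (eventually_add_mul_le (by linarith [(he.1 i hi).1]) fun h => by
        linarith [hlow i hi (by linarith)]).and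
      (eventually_add_mul_le (he.1 i hi).2 (hup i hi))
  have hint : ∀ᶠ ε in 𝓝[>] (0 : ℝ), ∀ k ∈ {k | k < l}, ∀ j ∈ {j | j ≤ l}, k ≤ j →
      smin k + elapsed t e k j + ε * ∑ m ∈ Ico k j, v m ≤ deadline l T smax j :=
    (eventually_all_finite (Set.finite_lt_nat l)).2 fun k hk =>
      (eventually_all_finite (Set.finite_le_nat l)).2 fun j hj =>
        eventually_imp_distrib_left.2 fun hkj =>
          eventually_add_mul_le (he.2 k j hk hkj hj) (htight k j hk hkj hj)
  obtain ⟨ε, ⟨hεb, hεi⟩, hε⟩ := ((hbounds.and hint).and self_mem_nhdsWithin).exists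
  refine ⟨ε, hε, fun i hi => ?_, fun k j hk hkj hjl => ?_⟩
  · simp only [Pi.add_apply, Pi.smul_apply, smul_eq_mul]
    constructor <;> linarith [hεb i hi]
  · rw [elapsed_add_smul, ← add_assoc]
    exact hεi k hk j hjl hkj

theorem exists_lt_of_tight {g e : ℕ → ℝ} {a k j : ℕ} (ha : a < l) (hka : k ≤ a) (haj : a < j)
    (hjl : j ≤ l) (ht : smin k + elapsed t e k j = deadline l T smax j)
    (hlt : e a < stoStep l T t dmax smin smax g a a) :
    ∃ m ∈ Ico k j, m ≠ a ∧ g m < e m := by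
  by_contra! h
  set δ := stoStep l T t dmax smin smax g a a
  have h₁ : elapsed t e k a ≤ elapsed t g k a :=
    elapsed_mono fun m hm => h m (by simp at hm ⊢; omega) (by simp at hm; omega)
  have h₂ : elapsed t e (a + 1) j ≤ elapsed t g (a + 1) j :=
    elapsed_mono fun m hm => h m (by simp at hm ⊢; omega) (by simp at hm; omega)
  have := ((le_stoStep_self_iff g ha).1 (le_refl δ)).2 j haj hjl
  rw [elapsed_eq_of_mem t e hka haj] at ht
  linarith [le_sHat t smin g hka]

theorem ServiceFeasible.exists_add_smul_single {e : ℕ → ℝ} {a : ℕ}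
    (he : ServiceFeasible l T t dmax smin smax e) (hdmax : e a < dmax a)
    (hslack : ∀ k j, k ≤ a → a < j → j ≤ l → smin k + elapsed t e k j ≠ deadline l T smax j) :
    ∃ ε : ℝ, 0 < ε ∧ ServiceFeasible l T t dmax smin smax (e + ε • Pi.single a 1) := by
  refine he.exists_add_smul (fun i _ _ => ?_) (fun i _ hei => ?_) fun k j _ _ hjl ht => ?_
  · simp only [Pi.single_apply]
    split_ifs <;> norm_num
  · rcases eq_or_ne i a with rfl | hia
    · linarith
    · simp [hia]
  · rw [sum_pi_single']
    split_ifs with hak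
    · rw [mem_Ico] at hak
      exact absurd ht (hslack k j hak.1 hak.2 hjl)
    · rfl

theorem ServiceFeasible.exists_add_smul_single_sub {e : ℕ → ℝ} {a m : ℕ}
    (he : ServiceFeasible l T t dmax smin smax e) (hdmax : e a < dmax a) (hm : 0 < e m)
    (hsub : ∀ k j, k ≤ a → a < j → j ≤ l →
      smin k + elapsed t e k j = deadline l T smax j → m ∈ Ico k j) :
    ∃ ε : ℝ, 0 < ε ∧
      ServiceFeasible l T t dmax smin smax (e + ε • (Pi.single a 1 - Pi.single m 1)) := by
  refine he.exists_add_smul (fun i _ hei => ?_) (fun i _ hei => ?_) fun k j _ _ hjl ht => ?_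
  · rcases eq_or_ne i m with rfl | him
    · linarith
    · simp only [Pi.sub_apply, Pi.single_apply, him, if_false]
      split_ifs <;> norm_num
  · rcases eq_or_ne i a with rfl | hia
    · linarith
    · simp only [Pi.sub_apply, Pi.single_apply, hia, if_false]
      split_ifs <;> norm_num
  · simp only [Pi.sub_apply]
    rw [sum_sub_distrib, sum_pi_single', sum_pi_single']
    split_ifs with hak hmk <;> try norm_num
    rw [mem_Ico] at hak
    exact absurd (hsub k j hak.1 hak.2 hjl ht) hmk

theorem exists_exchange {p g e : ℕ → ℝ} {a : ℕ} {P : ℕ → Prop} (hp : ∀ i < l, 0 ≤ p i)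
    (ha : a < l) (hP : ∀ m, P m → m < l ∧ g m = 0 ∧ p m ≤ p a)
    (he : ServiceFeasible l T t dmax smin smax e) (heg : ∀ m < l, m ≠ a → ¬ P m → e m = g m)
    (hlt : e a < stoStep l T t dmax smin smax g a a) :
    ∃ v : ℕ → ℝ, v a = 1 ∧ (∀ m, m ≠ a → ¬ P m → v m = 0) ∧
      0 ≤ ∑ i ∈ range l, p i * v i ∧
      ∃ ε : ℝ, 0 < ε ∧ ServiceFeasible l T t dmax smin smax (e + ε • v) := by
  have hdmax : e a < dmax a := hlt.trans_le ((le_stoStep_self_iff g ha).1 le_rfl).1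
  by_cases htight : ∃ k j, k ≤ a ∧ a < j ∧ j ≤ l ∧
      smin k + elapsed t e k j = deadline l T smax j
  · obtain ⟨k₀, j₀, hka, haj, hjl, ht, hsub⟩ := he.exists_tight_inter htight
    obtain ⟨m, hm, hma, hgm⟩ := exists_lt_of_tight ha hka haj hjl ht hlt
    rw [mem_Ico] at hm
    have hPm : P m := by_contra fun hPm => hgm.ne' (heg m (by omega) hma hPm)
    obtain ⟨hml, hgm0, hpm⟩ := hP m hPm
    refine ⟨Pi.single a 1 - Pi.single m 1, by simp [hma.symm], fun i hia hPi => ?_,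
      by simp [mul_sub, sum_sub_distrib, Pi.single_apply, ha, hml, hpm],
      he.exists_add_smul_single_sub hdmax (hgm0 ▸ hgm) fun k j hka haj hjl ht => ?_⟩
    · have him : i ≠ m := fun h => hPi (h ▸ hPm)
      simp [hia, him]
    · obtain ⟨hk, hj⟩ := hsub k j hka haj hjl ht
      rw [mem_Ico]
      omega
  · exact ⟨Pi.single a 1, by simp, fun i hia _ => by simp [hia],
      by simp [Pi.single_apply, ha, hp a ha],
      he.exists_add_smul_single hdmax fun k j hka haj hjl ht => htight ⟨k, j, hka, haj, hjl, ht⟩⟩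

theorem isClosed_setOf_serviceFeasible :
    IsClosed {d | ServiceFeasible l T t dmax smin smax d} := by
  simp only [ServiceFeasible, Set.ofPred_and, Set.ofPred_forall]
  exact (isClosed_iInter fun i => isClosed_iInter fun _ =>
      (isClosed_le continuous_const (continuous_apply i)).inter
        (isClosed_le (continuous_apply i) continuous_const)).inter
    (isClosed_iInter fun k => isClosed_iInter fun j => isClosed_iInter fun _ =>
      isClosed_iInter fun _ => isClosed_iInter fun _ =>
        isClosed_le (continuous_const.add (continuous_elapsed t k j)) continuous_const)

theorem isCompact_setOf_serviceFeasible {Q : ℕ → Prop} (hQ : ∀ m, Q m → m < l) (d : ℕ → ℝ) :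
    IsCompact {e | ServiceFeasible l T t dmax smin smax e ∧ ∀ m, ¬ Q m → e m = d m} := by
  classical
  refine (isCompact_univ_pi (s := fun i => if Q i then Set.Icc 0 (dmax i) else {d i})
    fun i => ?_).of_isClosed_subset ?_ ?_
  · split_ifs
    exacts [isCompact_Icc, isCompact_singleton]
  · simp only [Set.ofPred_and, Set.ofPred_forall]
    exact isClosed_setOf_serviceFeasible.inter (isClosed_iInter fun m => isClosed_iInter
      fun _ => isClosed_eq (continuous_apply m) continuous_const)
  · rintro e ⟨he, hed⟩ i -
    dsimp only
    split_ifs with hi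
    · exact he.1 i (hQ i hi)
    · exact hed i hi

theorem exists_profit_le_stoStep {p g d : ℕ → ℝ} {a : ℕ} {P : ℕ → Prop}
    (hp : ∀ i < l, 0 ≤ p i) (ha : a < l) (hP : ∀ m, P m → m < l ∧ g m = 0 ∧ p m ≤ p a)
    (hd : ServiceFeasible l T t dmax smin smax d) (hdg : ∀ m < l, m ≠ a → ¬ P m → d m = g m) :
    ∃ e, ServiceFeasible l T t dmax smin smax e ∧
      (∀ m < l, ¬ P m → e m = stoStep l T t dmax smin smax g a m) ∧
      ∑ i ∈ range l, p i * d i ≤ ∑ i ∈ range l, p i * e i := by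
  set K := {e | (ServiceFeasible l T t dmax smin smax e ∧ ∀ m, ¬ (m = a ∨ P m) → e m = d m) ∧
    ∑ i ∈ range l, p i * d i ≤ ∑ i ∈ range l, p i * e i}
  have hKc : IsCompact K :=
    (isCompact_setOf_serviceFeasible (fun m hm => hm.elim (· ▸ ha) fun hPm => (hP m hPm).1)
      d).inter_right (isClosed_le continuous_const
        (continuous_finsetSum _ fun i _ => continuous_const.mul (continuous_apply i)))
  obtain ⟨e, ⟨⟨he, hed⟩, hde⟩, hmax⟩ :=
    hKc.exists_isMaxOn ⟨d, ⟨hd, fun _ _ => rfl⟩, le_rfl⟩ (continuous_apply a).continuousOn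
  have heg : ∀ m < l, m ≠ a → ¬ P m → e m = g m := fun m hm hma hPm =>
    (hed m (not_or.2 ⟨hma, hPm⟩)).trans (hdg m hm hma hPm)
  have hea : e a = stoStep l T t dmax smin smax g a a := by
    refine (le_stoStep_self ha he fun m hm hma => ?_).antisymm (not_lt.1 fun hlt => ?_)
    · by_cases hPm : P m
      · exact (hP m hPm).2.1 ▸ (he.1 m hm).1
      · exact (heg m hm hma hPm).ge
    · obtain ⟨v, hva, hv, hpv, ε, hε, he'⟩ := exists_exchange hp ha hP he heg hlt
      have hmem : e + ε • v ∈ K := by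
        refine ⟨⟨he', fun m hm => ?_⟩, ?_⟩
        · simp [hv m (not_or.1 hm).1 (not_or.1 hm).2, hed m hm]
        simp only [Pi.add_apply, Pi.smul_apply, smul_eq_mul, mul_add, sum_add_distrib]
        rw [← sum_congr rfl fun i _ => mul_left_comm ε (p i) (v i), ← mul_sum]
        linarith [mul_nonneg hε.le hpv]
      have := hmax hmem
      simp only [Set.mem_ofPred_eq, Pi.add_apply, Pi.smul_apply, smul_eq_mul, hva] at this
      linarith
  refine ⟨e, he, fun m hm hPm => ?_, hde⟩
  rcases eq_or_ne m a with rfl | hma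
  · exact hea
  · rw [stoStep_apply_of_ne g hma, heg m hm hma hPm]

theorem profit_le_foldl_stoStep {p : ℕ → ℝ} (hp : ∀ i < l, 0 ≤ p i)
    (hdmax : ∀ i < l, 0 ≤ dmax i) (L : List ℕ) {g d : ℕ → ℝ}
    (hg : ServiceFeasible l T t dmax smin smax g) (hLl : ∀ m ∈ L, m < l) (hL0 : ∀ m ∈ L, g m = 0)
    (hnd : L.Nodup) (hsorted : L.Pairwise fun i j => p j ≤ p i)
    (hd : ServiceFeasible l T t dmax smin smax d) (hdg : ∀ m < l, m ∉ L → d m = g m) :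
    ∑ i ∈ range l, p i * d i ≤
      ∑ i ∈ range l, p i * L.foldl (stoStep l T t dmax smin smax) g i := by
  induction L generalizing g d with
  | nil => exact (sum_congr rfl fun i hi => by rw [hdg i (mem_range.1 hi) List.not_mem_nil]; rfl).le
  | cons a L ih =>
    obtain ⟨haL, hnd⟩ := List.nodup_cons.1 hnd
    obtain ⟨hpa, hsorted⟩ := List.pairwise_cons.1 hsorted
    have ha := hLl a List.mem_cons_self
    have hga := hL0 a List.mem_cons_self
    obtain ⟨e, he, heg, hde⟩ := exists_profit_le_stoStep (P := (· ∈ L)) hp ha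
      (fun m hm => ⟨hLl m (.tail a hm), hL0 m (.tail a hm), hpa m hm⟩) hd
      fun m hm hma hmL => hdg m hm (by simp [hma, hmL])
    exact hde.trans (ih (serviceFeasible_stoStep ha (hdmax a ha) hg hga)
      (fun m hm => hLl m (.tail a hm))
      (fun m hm => (stoStep_apply_of_ne g (ne_of_mem_of_not_mem hm haL)).trans (hL0 m (.tail a hm)))
      hnd hsorted he heg)

end exchange

theorem sto_optimal_general
    (l : ℕ) (T : ℝ) (p t dmax smin smax : ℕ → ℝ)
    (hp : ∀ i < l, 0 ≤ p i)
    (hdmax : ∀ i < l, 0 ≤ dmax i)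
    (hwin : ∀ i < l, sHat t smin (fun _ => 0) i ≤ smax i)
    (hT : sHat t smin (fun _ => 0) (l - 1) + t (l - 1) ≤ T)
    (order : List ℕ) (hperm : order.Perm (List.range l))
    (hsorted : order.Pairwise fun i j => p j ≤ p i)
    (dstar : ℕ → ℝ) (hdstar : dstar = stoD l T t dmax smin smax order)
    (sstar : ℕ → ℝ) (hsstar : sstar = sHat t smin dstar) :
    Feasible l T t dmax smin smax sstar dstar ∧
      ∀ s d : ℕ → ℝ, Feasible l T t dmax smin smax s d →
        ∑ i ∈ Finset.range l, p i * d i ≤ ∑ i ∈ Finset.range l, p i * dstar i := by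
  subst hsstar hdstar
  have hzero := serviceFeasible_zero (T := T) (smax := smax) hdmax hwin hT
  have hnd : order.Nodup := hperm.nodup_iff.2 List.nodup_range
  have hl : ∀ m ∈ order, m < l := fun m hm => List.mem_range.1 (hperm.subset hm)
  refine ⟨(serviceFeasible_foldl_stoStep hdmax order hzero hl (fun _ _ => rfl) hnd).feasible_sHat,
    fun s d hsd => ?_⟩
  exact profit_le_foldl_stoStep hp hdmax order hzero hl (fun _ _ => rfl) hnd hsorted
    hsd.serviceFeasible fun m hm hmo => absurd (hperm.mem_iff.2 (List.mem_range.2 hm)) hmo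

/-- Theorem 4.1: the pair `(s*, d*)` returned by Algorithm STO (processing the indices in
non-increasing order of profit) is feasible for the service-time LP and is optimal. -/
theorem sto_optimal
    (l : ℕ) (hl : 1 ≤ l) (T : ℝ) (p t dmax smin smax : ℕ → ℝ)
    (hp : ∀ i < l, 0 ≤ p i)
    (hdmax : ∀ i < l, 0 ≤ dmax i)
    (hwin : ∀ i < l, sHat t smin (fun _ => 0) i ≤ smax i)
    (hT : sHat t smin (fun _ => 0) (l - 1) + t (l - 1) ≤ T)
    (order : List ℕ) (hperm : order.Perm (List.range l))
    (hsorted : order.Pairwise fun i j => p j ≤ p i)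
    (dstar : ℕ → ℝ) (hdstar : dstar = stoD l T t dmax smin smax order)
    (sstar : ℕ → ℝ) (hsstar : sstar = sHat t smin dstar) :
    Feasible l T t dmax smin smax sstar dstar ∧
      ∀ s d : ℕ → ℝ, Feasible l T t dmax smin smax s d →
        ∑ i ∈ Finset.range l, p i * d i ≤ ∑ i ∈ Finset.range l, p i * dstar i :=
  sto_optimal_general l T p t dmax smin smax hp hdmax hwin hT order hperm hsorted dstar hdstar sstar
    hsstar
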